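/- arXiv:2205.04890 — 7 statements merged into one kernel-verified Lean document; each statement's English description precedes it below -/
import Mathlib

section
/- Let A and B be preorders, M a complete lattice, J a modular relation from A to B, d : A → M monotone, and define l : B → M by l y = ⨆ x ∈ {x | J x y}, d x. The following are equivalent: (i) for every y ∈ B there exists x with J x y and d x = l y (the suprema are attained as maxima); (ii) the left Kan extension l is absolute: for every complete lattice N and every monotone map h : M → N, h (l y) = ⨆ x ∈ {x | J x y}, h (d x) for every y ∈ B. -/
universe v

/-- A relation `J : A → B → Prop` between preorders is *modular* if
`x₁ ≤ x₂`, `J x₂ y₁` and `y₁ ≤ y₂` imply `J x₁ y₂`. -/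
def Modular {A B : Type*} [Preorder A] [Preorder B] (J : A → B → Prop) : Prop :=
  ∀ ⦃x₁ x₂ : A⦄ ⦃y₁ y₂ : B⦄, x₁ ≤ x₂ → J x₂ y₁ → y₁ ≤ y₂ → J x₁ y₂

/-- The left Kan extension `l y = ⨆ x ∈ {x | J x y}, d x` is absolute (preserved by all
monotone maps into complete lattices) iff its defining suprema are attained as maxima. -/
theorem stmt3 {A B : Type*} {M : Type v} [Preorder A] [Preorder B] [CompleteLattice M]
    (J : A → B → Prop) (hJ : Modular J) (d : A → M) (hd : Monotone d)
    (l : B → M) (hl : ∀ y : B, l y = ⨆ x ∈ {x | J x y}, d x) :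
    -- (i) the suprema are attained as maxima
    (∀ y : B, ∃ x, J x y ∧ d x = l y) ↔
    -- (ii) the left Kan extension is absolute
    (∀ (N : Type v) [CompleteLattice N] (h : M → N), Monotone h →
      ∀ y : B, h (l y) = ⨆ x ∈ {x | J x y}, h (d x)) := by
  constructor
  · intro hi N _ h hmono y
    obtain ⟨x, hx, hdx⟩ := hi y
    apply le_antisymm
    · rw [← hdx]
      exact le_iSup₂ (f := fun x _ => h (d x)) x hx
    · exact iSup₂_le fun x' hx' => hmono (by rw [hl y]; exact le_iSup₂ (f := fun x _ => d x) x' hx')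
  · intro hii y
    have := hii (LowerSet M) (fun m => LowerSet.Iic m) (fun a b hab => fun c hc => LowerSet.mem_Iic_iff.2 ((LowerSet.mem_Iic_iff.1 hc).trans hab)) y
    have hmem : l y ∈ (⨆ x ∈ {x | J x y}, LowerSet.Iic (d x)) := by
      rw [← this]; exact le_refl (l y)
    rw [LowerSet.mem_iSup₂_iff] at hmem
    obtain ⟨x, hx, hle⟩ := hmem
    refine ⟨x, hx, le_antisymm ?_ hle⟩
    rw [hl y]
    exact le_iSup₂ (f := fun x _ => d x) x hx
end

section
/- Let A, B, C, D be preorders, J a modular relation from A to B, K a modular relation from C to D, and f : A → C, g : B → D monotone maps such that J x y implies K (f x) (g y) for all x, y. The following are equivalent: (i) for all z ∈ C and y ∈ B, K z (g y) holds if and only if there exists x ∈ A with z ≤ f x and J x y (the left Beck–Chevalley condition); (ii) the square is left exact: for every complete lattice M, every monotone d : C → M, and every y ∈ B, ⨆ z ∈ {z | K z (g y)}, d z = ⨆ x ∈ {x | J x y}, d (f x). -/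
universe u

/-- For a square of modular relations `J : A ⇸ B`, `K : C ⇸ D` over monotone maps
`f : A → C` and `g : B → D`, the left Beck–Chevalley condition holds iff the square
is left exact. -/
theorem stmt4 {A B : Type*} {C : Type u} {D : Type*}
    [Preorder A] [Preorder B] [Preorder C] [Preorder D]
    (J : A → B → Prop) (hJ : Modular J) (K : C → D → Prop) (hK : Modular K)
    (f : A → C) (hf : Monotone f) (g : B → D) (hg : Monotone g)
    (hcell : ∀ x y, J x y → K (f x) (g y)) :
    -- (i) the left Beck–Chevalley condition
    (∀ (z : C) (y : B), K z (g y) ↔ ∃ x, z ≤ f x ∧ J x y) ↔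
    -- (ii) left exactness
    (∀ (M : Type u) [CompleteLattice M] (d : C → M), Monotone d → ∀ y : B,
      (⨆ z ∈ {z | K z (g y)}, d z) = ⨆ x ∈ {x | J x y}, d (f x)) := by
  constructor
  · intro hbc M _ d hd y
    apply le_antisymm
    · refine iSup₂_le fun z hz => ?_
      obtain ⟨x, hzx, hxy⟩ := (hbc z y).1 hz
      exact le_trans (hd hzx) (le_iSup₂ (f := fun x _ => d (f x)) x hxy)
    · exact iSup₂_le fun x hx => le_iSup₂ (f := fun z _ => d z) (f x) (hcell x y hx)
  · intro hle z y
    constructor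
    · intro hz
      have := hle (LowerSet C) (fun c => LowerSet.Iic c)
        (fun a b hab => LowerSet.Iic_le.2 hab) y
      have hmem : z ∈ ⨆ w ∈ {w | K w (g y)}, LowerSet.Iic w :=
        LowerSet.mem_iSup₂_iff.2 ⟨z, hz, le_refl z⟩
      rw [this] at hmem
      obtain ⟨x, hx, hzx⟩ := LowerSet.mem_iSup₂_iff.1 hmem
      exact ⟨x, hzx, hx⟩
    · rintro ⟨x, hzx, hxy⟩
      exact hK hzx (hcell x y hxy) le_rfl
end

section
/- Let M and N be preorders and f : M → N a monotone map. The following are equivalent: (i) for every subset S ⊆ M there exists an element of N that is a least upper bound of the image f '' S; (ii) the monotone map g : N → LowerSet M defined by g n = {m | f m ≤ n} (which is indeed a lower set) has a left adjoint, i.e. there is a monotone z : LowerSet M → N such that z S ≤ n if and only if S ⊆ g n, for all lower sets S and all n ∈ N; (iii) f is total: for every preorder B and every modular relation J from M to B there exists a monotone l : B → N such that, for every y ∈ B, l y is a least upper bound of f '' {m | J m y}. -/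
/-!
Writing `g n = f⁻¹(↓n)`, an element `n` bounds `f '' S` from above iff `S ⊆ g n`, so `n` is a
least upper bound of `f '' S` iff `n ≤ n' ↔ S ⊆ g n'` for all `n'`: a choice of such least upper
bounds for all lower sets `S` is exactly a left adjoint of `g`. Since `g n` is a lower set,
`f '' S` and `f '' (↓S)` have the same upper bounds, so it suffices to have suprema over lower
sets. A modular relation `J` gives the lower sets `{m | J m y}`, increasing in `y`, whence the
Kan extension `l`; conversely every lower set arises from a modular relation into `PUnit`.
-/

universe u v w

open Set

section

variable {A B : Type*} [Preorder A] [Preorder B] {J : A → B → Prop}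

theorem Modular.isLowerSet_setOf (hJ : Modular J) (y : B) : IsLowerSet {x | J x y} :=
  fun _ _ hx h => hJ hx h le_rfl

theorem Modular.setOf_subset_setOf (hJ : Modular J) {y₁ y₂ : B} (hy : y₁ ≤ y₂) :
    {x | J x y₁} ⊆ {x | J x y₂} :=
  fun _ h => hJ le_rfl h hy

end

namespace Monotone

variable {M N : Type*} [Preorder M] [Preorder N] {f : M → N}

def sublevel (hf : Monotone f) (n : N) : LowerSet M :=
  ⟨f ⁻¹' Iic n, (isLowerSet_Iic n).preimage hf⟩

theorem sublevel_mono (hf : Monotone f) : Monotone hf.sublevel :=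
  fun _ _ hn _ hm => le_trans hm hn

theorem mem_upperBounds_image_iff_subset_sublevel (hf : Monotone f) {s : Set M} {n : N} :
    n ∈ upperBounds (f '' s) ↔ s ⊆ hf.sublevel n := by
  rw [mem_upperBounds_iff_subset_Iic, image_subset_iff]
  rfl

theorem isLUB_image_iff (hf : Monotone f) {s : Set M} {n : N} :
    IsLUB (f '' s) n ↔ ∀ n', n ≤ n' ↔ s ⊆ hf.sublevel n' := by
  simp only [isLUB_iff_le_iff, hf.mem_upperBounds_image_iff_subset_sublevel]

theorem isLUB_image_lowerClosure_iff (hf : Monotone f) {s : Set M} {n : N} :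
    IsLUB (f '' lowerClosure s) n ↔ IsLUB (f '' s) n := by
  simp only [hf.isLUB_image_iff]
  exact forall_congr' fun _ => iff_congr Iff.rfl lowerClosure_le

theorem forall_exists_isLUB_image_iff_lowerSet (hf : Monotone f) :
    (∀ s : Set M, ∃ n, IsLUB (f '' s) n) ↔ ∀ s : LowerSet M, ∃ n, IsLUB (f '' s) n :=
  ⟨fun h s => h s, fun h s => (h (lowerClosure s)).imp fun _ => hf.isLUB_image_lowerClosure_iff.1⟩

theorem forall_exists_isLUB_image_iff_exists_galoisConnection (hf : Monotone f) :
    (∀ s : LowerSet M, ∃ n, IsLUB (f '' s) n) ↔ ∃ z, GaloisConnection z hf.sublevel := by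
  constructor
  · intro h
    choose z hz using h
    exact ⟨z, fun s => hf.isLUB_image_iff.1 (hz s)⟩
  · rintro ⟨z, gc⟩ s
    exact ⟨z s, hf.isLUB_image_iff.2 (gc s)⟩

end Monotone

theorem forall_exists_isLUB_image_iff_forall_modular {M : Type u} {N : Type v} [Preorder M]
    [Preorder N] (f : M → N) :
    (∀ s : LowerSet M, ∃ n, IsLUB (f '' s) n) ↔
      ∀ (B : Type w) [Preorder B] (J : M → B → Prop), Modular J →
        ∃ l : B → N, Monotone l ∧ ∀ y : B, IsLUB (f '' {m | J m y}) (l y) := by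
  constructor
  · intro h B _ J hJ
    choose l hl using fun y => h ⟨_, hJ.isLowerSet_setOf y⟩
    exact ⟨l, fun _ _ hy => (hl _).mono (hl _) (image_mono (hJ.setOf_subset_setOf hy)), hl⟩
  · intro h s
    obtain ⟨l, -, hl⟩ := h PUnit (fun m _ => m ∈ s) fun _ _ _ _ hx hm _ => s.lower hx hm
    exact ⟨l .unit, hl .unit⟩

/-- A monotone map `f : M → N` admits least upper bounds of all images `f '' S` iff the
monotone map `g : N → LowerSet M`, `g n = {m | f m ≤ n}`, has a left adjoint, iff `f` is
total (the pointwise left Kan extension of `f` along every modular relation out of `M`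
exists). -/
theorem stmt5 {M : Type u} {N : Type v} [Preorder M] [Preorder N]
    (f : M → N) (hf : Monotone f) :
    ∃ g : N → LowerSet M,
      (∀ n : N, (g n : Set M) = {m | f m ≤ n}) ∧
      Monotone g ∧
      -- (i) ↔ (ii)
      ((∀ S : Set M, ∃ n : N, IsLUB (f '' S) n) ↔
        ∃ z : LowerSet M → N, Monotone z ∧
          ∀ (S : LowerSet M) (n : N), z S ≤ n ↔ (S : Set M) ⊆ (g n : Set M)) ∧
      -- (i) ↔ (iii)
      ((∀ S : Set M, ∃ n : N, IsLUB (f '' S) n) ↔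
        ∀ (B : Type w) [Preorder B] (J : M → B → Prop), Modular J →
          ∃ l : B → N, Monotone l ∧ ∀ y : B, IsLUB (f '' {m | J m y}) (l y)) := by
  refine ⟨hf.sublevel, fun _ => rfl, hf.sublevel_mono, ?_, ?_⟩
  · rw [hf.forall_exists_isLUB_image_iff_lowerSet,
      hf.forall_exists_isLUB_image_iff_exists_galoisConnection]
    exact exists_congr fun z => ⟨fun gc => ⟨gc.monotone_l, gc⟩, And.right⟩
  · rw [hf.forall_exists_isLUB_image_iff_lowerSet]
    exact forall_exists_isLUB_image_iff_forall_modular f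
end

section
/- Let M be a preorder and N a complete lattice, and let y : M → LowerSet M denote the principal lower set map x ↦ ↓x. Then f ↦ f ∘ y is a bijection from the set of sSup-preserving maps f : LowerSet M → N (maps satisfying f (sSup 𝒮) = ⨆ S ∈ 𝒮, f S for every set 𝒮 of lower sets of M; such maps are automatically monotone) onto the set of monotone maps M → N, and its inverse sends a monotone g : M → N to the map S ↦ ⨆ x ∈ S, g x. -/
universe u v

section Aux
variable {M : Type u} {N : Type v} [Preorder M] [CompleteLattice N]

lemma aux_mono (f : LowerSet M → N)
    (hf : ∀ 𝒮 : Set (LowerSet M), f (sSup 𝒮) = ⨆ S ∈ 𝒮, f S) : Monotone f := by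
  intro S T hST
  have h : sSup {S, T} = T := by
    rw [sSup_pair]; exact sup_eq_right.mpr hST
  have := hf {S, T}
  rw [h] at this
  rw [this]
  exact le_iSup₂_of_le S (Or.inl rfl) le_rfl

lemma aux_decomp (S : LowerSet M) : S = sSup (LowerSet.Iic '' (S : Set M)) := by
  apply le_antisymm
  · intro x hx
    simp only [LowerSet.coe_sSup, Set.mem_iUnion]
    exact ⟨LowerSet.Iic x, ⟨x, hx, rfl⟩, le_refl x⟩
  · rw [sSup_le_iff]
    rintro T ⟨x, hx, rfl⟩
    intro z hz
    exact S.lower hz hx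

lemma aux_left (f : LowerSet M → N)
    (hf : ∀ 𝒮 : Set (LowerSet M), f (sSup 𝒮) = ⨆ S ∈ 𝒮, f S) (S : LowerSet M) :
    (⨆ x ∈ (S : Set M), f (LowerSet.Iic x)) = f S := by
  conv_rhs => rw [aux_decomp S]
  rw [hf, iSup_image]

lemma aux_sSup (g : M → N) (𝒮 : Set (LowerSet M)) :
    (⨆ x ∈ ((sSup 𝒮 : LowerSet M) : Set M), g x) = ⨆ S ∈ 𝒮, ⨆ x ∈ (S : Set M), g x := by
  apply le_antisymm
  · refine iSup₂_le fun x hx => ?_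
    simp only [LowerSet.coe_sSup, Set.mem_iUnion] at hx
    obtain ⟨S, hS, hxS⟩ := hx
    exact le_iSup₂_of_le S hS (le_iSup₂_of_le x hxS le_rfl)
  · refine iSup₂_le fun S hS => iSup₂_le fun x hx => ?_
    exact le_iSup₂_of_le x (by simp only [LowerSet.coe_sSup, Set.mem_iUnion]; exact ⟨S, hS, hx⟩) le_rfl

end Aux

/-- Precomposition with the principal-lower-set map `y : M → LowerSet M`, `x ↦ ↓x`, is a
bijection from `sSup`-preserving maps `LowerSet M → N` (which are automatically monotone)
onto monotone maps `M → N`; its inverse sends `g` to `S ↦ ⨆ x ∈ S, g x`.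
(`LowerSet M` is the free cocompletion of `M`.) -/
theorem stmt6 {M : Type u} {N : Type v} [Preorder M] [CompleteLattice N] :
    -- sSup-preserving maps are automatically monotone
    (∀ f : LowerSet M → N,
      (∀ 𝒮 : Set (LowerSet M), f (sSup 𝒮) = ⨆ S ∈ 𝒮, f S) → Monotone f) ∧
    -- the bijection
    (∃ e : {f : LowerSet M → N // ∀ 𝒮 : Set (LowerSet M), f (sSup 𝒮) = ⨆ S ∈ 𝒮, f S}
        ≃ {g : M → N // Monotone g},
      (∀ f, (e f).1 = fun x : M => f.1 (LowerSet.Iic x)) ∧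
      (∀ g, (e.symm g).1 = fun S : LowerSet M => ⨆ x ∈ (S : Set M), g.1 x)) := by
  refine ⟨aux_mono, ⟨⟨
      fun f => ⟨fun x => f.1 (LowerSet.Iic x),
        fun a b hab => aux_mono f.1 f.2 (LowerSet.Iic_le.mpr (LowerSet.mem_Iic_iff.mpr hab))⟩,
      fun g => ⟨fun S => ⨆ x ∈ (S : Set M), g.1 x, aux_sSup g.1⟩,
      ?_, ?_⟩, fun f => rfl, fun g => rfl⟩⟩
  · rintro ⟨f, hf⟩
    ext S
    exact aux_left f hf S
  · rintro ⟨g, hg⟩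
    ext x
    simp only
    apply le_antisymm
    · exact iSup₂_le fun y hy => hg hy
    · exact le_iSup₂_of_le x (le_refl x) le_rfl
end

section
/- Let A and B be closed-ordered closure spaces. Equip LowerSet A (the lower sets of A, ordered by inclusion) with the upper Vietoris closure structure, whose closed sets are all intersections of families of sets of the form V⁺ = {X ∈ LowerSet A | X ∩ V ≠ ∅} with V closed in A. Then: (a) every closed subset of LowerSet A in this structure is an upper set for inclusion, so LowerSet A becomes a modular closure space; and (b) the assignment J ↦ (y ↦ {x | J x y}) is a bijection from the set of closed modular relations from A to B onto the set of maps h : B → LowerSet A that are monotone and continuous for the upper Vietoris closure structure. -/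
/-- A closure space structure: a collection of closed sets containing the whole space
and closed under arbitrary intersections. -/
def IsClosureSystem {α : Type*} (𝒞 : Set (Set α)) : Prop :=
  Set.univ ∈ 𝒞 ∧ ∀ F ⊆ 𝒞, ⋂₀ F ∈ 𝒞

/-- A closed-ordered closure space: a closure space with a preorder such that the upper
set generated by any closed set is closed. -/
def IsClosedOrdered {α : Type*} [Preorder α] (𝒞 : Set (Set α)) : Prop :=
  IsClosureSystem 𝒞 ∧ ∀ V ∈ 𝒞, {x | ∃ v ∈ V, v ≤ x} ∈ 𝒞

/-- A modular closure space: a closure space with a preorder in which every closed set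
equals the upper set it generates. -/
def IsModularClosure {α : Type*} [Preorder α] (𝒞 : Set (Set α)) : Prop :=
  IsClosureSystem 𝒞 ∧ ∀ V ∈ 𝒞, {x | ∃ v ∈ V, v ≤ x} = V

/-- `V⁺ = {X ∈ LowerSet A | X ∩ V ≠ ∅}`. -/
def plusSet {A : Type*} [Preorder A] (V : Set A) : Set (LowerSet A) :=
  {X | ((X : Set A) ∩ V).Nonempty}

/-- The upper Vietoris closure structure on `LowerSet A`: closed sets are all
intersections of families of sets of the form `V⁺` with `V` closed in `A`. -/
def vietorisCloseds {A : Type*} [Preorder A] (𝒞 : Set (Set A)) : Set (Set (LowerSet A)) :=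
  {W | ∃ F : Set (Set (LowerSet A)), (∀ G ∈ F, ∃ V ∈ 𝒞, G = plusSet V) ∧ W = ⋂₀ F}

/-- The upper Vietoris space of downsets of a closed-ordered closure space is a modular
closure space, and `J ↦ (y ↦ {x | J x y})` is a bijection from closed modular relations
`A ⇸ B` onto monotone continuous maps `B → LowerSet A`. -/
theorem stmt7 {A B : Type*} [Preorder A] [Preorder B]
    (𝒞A : Set (Set A)) (𝒞B : Set (Set B))
    (hA : IsClosedOrdered 𝒞A) (hB : IsClosedOrdered 𝒞B) :
    -- (a)
    (∀ W ∈ vietorisCloseds 𝒞A, IsUpperSet W) ∧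
    IsModularClosure (vietorisCloseds 𝒞A) ∧
    -- (b)
    (∃ e : {J : A → B → Prop // Modular J ∧ ∀ V ∈ 𝒞A, {y | ∃ x ∈ V, J x y} ∈ 𝒞B}
        ≃ {h : B → LowerSet A // Monotone h ∧ ∀ W ∈ vietorisCloseds 𝒞A, h ⁻¹' W ∈ 𝒞B},
      ∀ (J : {J : A → B → Prop // Modular J ∧ ∀ V ∈ 𝒞A, {y | ∃ x ∈ V, J x y} ∈ 𝒞B})
        (y : B), ((e J).1 y : Set A) = {x | J.1 x y}) := by
  classical
  -- (a): every closed set is an upper set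
  have hupper : ∀ W ∈ vietorisCloseds 𝒞A, IsUpperSet W := by
    rintro W ⟨F, hF, rfl⟩ X Y hXY hX
    rw [Set.mem_sInter] at hX ⊢
    intro G hG
    obtain ⟨V, -, rfl⟩ := hF G hG
    obtain ⟨a, haX, haV⟩ := hX _ hG
    exact ⟨a, hXY haX, haV⟩
  -- closure system
  have hsys : IsClosureSystem (vietorisCloseds 𝒞A) := by
    constructor
    · exact ⟨∅, by simp, by simp⟩
    · intro F hF
      choose fam hfam1 hfam2 using fun W (hW : W ∈ F) => hF hW
      refine ⟨⋃ W ∈ F, fam W ‹_›, ?_, ?_⟩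
      · intro G hG
        simp only [Set.mem_iUnion] at hG
        obtain ⟨W, hW, hG⟩ := hG
        exact hfam1 W hW G hG
      · ext X
        simp only [Set.mem_sInter, Set.mem_iUnion]
        constructor
        · rintro h G ⟨W, hW, hG⟩
          have := h W hW
          rw [hfam2 W hW] at this
          exact this G hG
        · intro h W hW
          rw [hfam2 W hW]
          exact fun G hG => h G ⟨W, hW, hG⟩
  refine ⟨hupper, ⟨hsys, ?_⟩, ?_⟩
  · intro W hW
    ext X
    simp only [Set.mem_setOf_eq]
    exact ⟨fun ⟨v, hv, hle⟩ => hupper W hW hle hv, fun hX => ⟨X, hX, le_refl X⟩⟩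
  -- (b)
  · have key : ∀ (h : B → LowerSet A) (V : Set A),
        h ⁻¹' plusSet V = {y | ∃ x ∈ V, x ∈ h y} := by
      intro h V
      ext y
      simp only [Set.mem_preimage, plusSet, Set.mem_setOf_eq, Set.Nonempty]
      exact ⟨fun ⟨x, hx, hv⟩ => ⟨x, hv, hx⟩, fun ⟨x, hv, hx⟩ => ⟨x, hx, hv⟩⟩
    refine ⟨{
      toFun := fun J => ⟨fun y => ⟨{x | J.1 x y},
        fun a b hba ha => J.2.1 hba ha (le_refl y)⟩, ?_, ?_⟩
      invFun := fun h => ⟨fun x y => x ∈ h.1 y, ?_, ?_⟩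
      left_inv := ?_
      right_inv := ?_ }, fun J y => rfl⟩
    · -- monotone
      intro y₁ y₂ hy
      intro x hx
      exact J.2.1 (le_refl x) hx hy
    · -- continuous
      rintro W ⟨F, hF, rfl⟩
      have : (fun y => (⟨{x | J.1 x y}, fun a b hba ha => J.2.1 hba ha (le_refl y)⟩ : LowerSet A)) ⁻¹' ⋂₀ F
          = ⋂₀ ((fun G => (fun y => (⟨{x | J.1 x y}, fun a b hba ha => J.2.1 hba ha (le_refl y)⟩ : LowerSet A)) ⁻¹' G) '' F) := by
        ext y; simp [Set.preimage_sInter]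
      rw [this]
      apply hB.1.2
      rintro S ⟨G, hG, rfl⟩
      obtain ⟨V, hV, rfl⟩ := hF G hG
      dsimp only
      rw [key]
      exact J.2.2 V hV
    · -- modular
      intro x₁ x₂ y₁ y₂ hx h12 hy
      exact (h.1 y₂).lower hx (h.2.1 hy h12)
    · -- closed images
      intro V hV
      have := h.2.2 (plusSet V) ⟨{plusSet V}, by aesop, by simp⟩
      rwa [key] at this
    · intro J; rfl
    · intro h
      ext y x <;> rfl
end

section
/- Let A, B, M be modular closure spaces, let d : A → M be monotone and continuous, and let J be a closed modular relation from A to B. Suppose l : B → M is a map such that for every y ∈ B: there exists x with J x y and d x = l y, and d x′ ≤ l y for every x′ with J x′ y (so l y is a maximum of d on {x | J x y}). Then: (i) l is monotone; (ii) l is continuous; indeed, for every closed V ⊆ M, l⁻¹(V) = {y | ∃ x, J x y ∧ d x ∈ V}, and this set is closed in B; (iii) l is the left Kan extension of d along J: for every monotone k : B → M, l ≤ k pointwise if and only if d x ≤ k y for all x, y with J x y. -/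
/-- Pointwise left Kan extensions of morphisms of modular closure spaces: if `l y` is a
maximum of `d` on `{x | J x y}` for every `y`, then `l` is monotone, continuous, and the
left Kan extension of `d` along the closed modular relation `J`. -/
theorem stmt8 {A B M : Type*} [Preorder A] [Preorder B] [Preorder M]
    (𝒞A : Set (Set A)) (𝒞B : Set (Set B)) (𝒞M : Set (Set M))
    (hA : IsModularClosure 𝒞A) (hB : IsModularClosure 𝒞B) (hM : IsModularClosure 𝒞M)
    (d : A → M) (hd : Monotone d) (hdc : ∀ V ∈ 𝒞M, d ⁻¹' V ∈ 𝒞A)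
    (J : A → B → Prop) (hJ : Modular J)
    (hJc : ∀ V ∈ 𝒞A, {y | ∃ x ∈ V, J x y} ∈ 𝒞B)
    (l : B → M)
    (hmax : ∀ y : B, (∃ x, J x y ∧ d x = l y) ∧ ∀ x', J x' y → d x' ≤ l y) :
    -- (i)
    Monotone l ∧
    -- (ii)
    (∀ V ∈ 𝒞M, l ⁻¹' V = {y | ∃ x, J x y ∧ d x ∈ V}) ∧
    (∀ V ∈ 𝒞M, l ⁻¹' V ∈ 𝒞B) ∧
    -- (iii)
    (∀ k : B → M, Monotone k → ((∀ y, l y ≤ k y) ↔ ∀ x y, J x y → d x ≤ k y)) := by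
  have hpre : ∀ V ∈ 𝒞M, l ⁻¹' V = {y | ∃ x, J x y ∧ d x ∈ V} := by
    intro V hV
    ext y
    constructor
    · intro hy
      obtain ⟨x, hxy, hdx⟩ := (hmax y).1
      exact ⟨x, hxy, hdx ▸ hy⟩
    · rintro ⟨x, hxy, hdx⟩
      have := (hmax y).2 x hxy
      have : l y ∈ {m | ∃ v ∈ V, v ≤ m} := ⟨d x, hdx, this⟩
      rwa [hM.2 V hV] at this
  refine ⟨?_, hpre, ?_, ?_⟩
  · intro y₁ y₂ hy
    obtain ⟨x, hxy, hdx⟩ := (hmax y₁).1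
    exact hdx ▸ (hmax y₂).2 x (hJ le_rfl hxy hy)
  · intro V hV
    rw [hpre V hV]
    have : {y | ∃ x, J x y ∧ d x ∈ V} = {y | ∃ x ∈ d ⁻¹' V, J x y} := by
      ext y; constructor
      · rintro ⟨x, h1, h2⟩; exact ⟨x, h2, h1⟩
      · rintro ⟨x, h1, h2⟩; exact ⟨x, h2, h1⟩
    rw [this]
    exact hJc _ (hdc V hV)
  · intro k hk
    constructor
    · intro h x y hxy
      exact le_trans ((hmax y).2 x hxy) (h y)
    · intro h y
      obtain ⟨x, hxy, hdx⟩ := (hmax y).1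
      exact hdx ▸ h x y hxy
end

section
/- Let C be a category with finite limits and a subobject classifier truth : ⊤_C ⟶ Ω, let A and P be objects, and let n : N ⟶ A ⨯ P be a monomorphism exhibiting P as a power object of A: for every object B and every monomorphism r : R ⟶ A ⨯ B there is a unique χ : B ⟶ P such that r is a pullback of n along 𝟙_A ⨯ χ. Then for every object B, the map sending g : B ⟶ P to the characteristic morphism (with respect to the subobject classifier) of the pullback of n along 𝟙_A ⨯ g is a bijection Hom(B, P) ≅ Hom(A ⨯ B, Ω), natural in B: for every h : B′ ⟶ B, the morphism A ⨯ B′ ⟶ Ω corresponding to g ∘ h equals the composite of 𝟙_A ⨯ h with the morphism corresponding to g. -/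
open CategoryTheory CategoryTheory.Limits

universe v u

/-- Transfer a pullback square along an iso of the top-left corner. -/
lemma transfer_pb {C : Type u} [Category.{v} C] {R R' X Y Z : C} {r : R ⟶ X} {r' : R' ⟶ X}
    (e : R' ≅ R) (he : e.hom ≫ r = r')
    {s : R ⟶ Y} {f : X ⟶ Z} {g : Y ⟶ Z}
    (h : IsPullback r s f g) : IsPullback r' (e.hom ≫ s) f g :=
  h.of_iso e.symm (Iso.refl _) (Iso.refl _) (Iso.refl _)
    (by simp [← he]) (by simp) (by simp) (by simp)

/-- If `n : N ⟶ A ⨯ P` exhibits `P` as a power object of `A` in a finitely complete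
category with a subobject classifier `Ω`, then sending `g : B ⟶ P` to the characteristic
morphism of the pullback of `n` along `𝟙 A ⨯ g` is a bijection `Hom(B, P) ≅ Hom(A ⨯ B, Ω)`
natural in `B`. -/
theorem stmt12 {C : Type u} [Category.{v} C] [HasFiniteLimits C]
    -- a subobject classifier
    (Ω : C) (truth : ⊤_ C ⟶ Ω)
    (hclass : ∀ {U X : C} (m : U ⟶ X) [Mono m],
      ∃! χ : X ⟶ Ω, IsPullback m (terminal.from U) χ truth)
    -- a power object of `A`
    (A P N : C) (n : N ⟶ A ⨯ P) [Mono n]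
    (hP : ∀ {B R : C} (r : R ⟶ A ⨯ B) [Mono r],
      ∃! χ : B ⟶ P, ∃ j : R ⟶ N, IsPullback r j (prod.map (𝟙 A) χ) n) :
    ∃ Φ : ∀ B : C, (B ⟶ P) ≃ (A ⨯ B ⟶ Ω),
      -- `Φ B g` is the characteristic morphism of the pullback of `n` along `𝟙 A ⨯ g`
      (∀ (B : C) (g : B ⟶ P), ∃ (R : C) (r : R ⟶ A ⨯ B) (j : R ⟶ N),
        IsPullback r j (prod.map (𝟙 A) g) n ∧
        IsPullback r (terminal.from R) (Φ B g) truth) ∧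
      -- naturality in `B`
      (∀ {B B' : C} (h : B' ⟶ B) (g : B ⟶ P),
        Φ B' (h ≫ g) = prod.map (𝟙 A) h ≫ Φ B g) := by
  haveI : IsSplitMono truth :=
    IsSplitMono.mk' ⟨terminal.from Ω, terminal.hom_ext _ _⟩
  -- the characteristic morphism of the pullback of `n` along `𝟙 A ⨯ g`
  let toF : ∀ (B : C), (B ⟶ P) → (A ⨯ B ⟶ Ω) := fun B g =>
    (hclass (pullback.fst (prod.map (𝟙 A) g) n)).choose
  have factA : ∀ (B : C) (g : B ⟶ P),
      IsPullback (pullback.fst (prod.map (𝟙 A) g) n)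
        (terminal.from _) (toF B g) truth := fun B g =>
    (hclass (pullback.fst (prod.map (𝟙 A) g) n)).choose_spec.1
  -- `toF B g` classifies any pullback of `n` along `𝟙 A ⨯ g`
  have classify : ∀ {B R' : C} (g : B ⟶ P) (r' : R' ⟶ A ⨯ B) (j' : R' ⟶ N),
      IsPullback r' j' (prod.map (𝟙 A) g) n →
      IsPullback r' (terminal.from R') (toF B g) truth := by
    intro B R' g r' j' hpb
    have h0 : IsPullback (pullback.fst (prod.map (𝟙 A) g) n)
        (pullback.snd (prod.map (𝟙 A) g) n) (prod.map (𝟙 A) g) n :=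
      IsPullback.of_hasPullback _ _
    have he := hpb.isoIsPullback_hom_fst _ _ h0
    have := transfer_pb (hpb.isoIsPullback _ _ h0) he (factA B g)
    rwa [terminal.hom_ext ((hpb.isoIsPullback _ _ h0).hom ≫ terminal.from _)
      (terminal.from R')] at this
  -- injectivity
  have inj : ∀ (B : C), Function.Injective (toF B) := by
    intro B g g' heq
    have h1 := factA B g
    have h2 : IsPullback (pullback.fst (prod.map (𝟙 A) g') n)
        (terminal.from _) (toF B g) truth := heq ▸ factA B g'
    have he := h2.isoIsPullback_hom_fst _ _ h1
    have hpb' := transfer_pb (h2.isoIsPullback _ _ h1) he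
      (IsPullback.of_hasPullback (prod.map (𝟙 A) g) n)
    exact ((hP (pullback.fst (prod.map (𝟙 A) g') n)).unique
      ⟨_, hpb'⟩ ⟨_, IsPullback.of_hasPullback _ _⟩).symm ▸ rfl
  -- surjectivity
  have surj : ∀ (B : C), Function.Surjective (toF B) := by
    intro B f
    have hm0 : IsPullback (pullback.fst f truth) (pullback.snd f truth) f truth :=
      IsPullback.of_hasPullback f truth
    obtain ⟨g, ⟨j, hj⟩, -⟩ := hP (pullback.fst f truth)
    refine ⟨g, ?_⟩
    have h1 : IsPullback (pullback.fst f truth) (terminal.from _) (toF B g) truth :=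
      classify g _ j hj
    have h2 : IsPullback (pullback.fst f truth) (terminal.from _) f truth := by
      rwa [terminal.hom_ext (pullback.snd f truth) (terminal.from _)] at hm0
    exact ((hclass (pullback.fst f truth)).unique h1 h2).symm ▸ rfl
  refine ⟨fun B => Equiv.ofBijective (toF B) ⟨inj B, surj B⟩, ?_, ?_⟩
  · intro B g
    exact ⟨_, _, _, IsPullback.of_hasPullback _ _, factA B g⟩
  · intro B B' h g
    -- paste the pullback of `rg` along `𝟙 A ⨯ h`
    set rg := pullback.fst (prod.map (𝟙 A) g) n with hrg
    have q1 : IsPullback (pullback.fst (prod.map (𝟙 A) h) rg)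
        (pullback.snd (prod.map (𝟙 A) h) rg) (prod.map (𝟙 A) h) rg :=
      IsPullback.of_hasPullback _ _
    have big1 := q1.paste_vert (IsPullback.of_hasPullback (prod.map (𝟙 A) g) n)
    rw [show prod.map (𝟙 A) h ≫ prod.map (𝟙 A) g = prod.map (𝟙 A) (h ≫ g) by
      simp [prod.map_map]] at big1
    have big2 := q1.paste_vert (factA B g)
    rw [terminal.hom_ext (pullback.snd (prod.map (𝟙 A) h) rg ≫ terminal.from _)
      (terminal.from _)] at big2
    have h1 : IsPullback (pullback.fst (prod.map (𝟙 A) h) rg)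
        (terminal.from _) (toF B' (h ≫ g)) truth :=
      classify (h ≫ g) _ _ big1
    exact (hclass (pullback.fst (prod.map (𝟙 A) h) rg)).unique h1 big2
end
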